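/- arXiv:2101.08364 — 6 statements merged into one kernel-verified Lean document; each statement's English description precedes it below -/
import Mathlib

section
/- Hindley's strong postponement lemma: for any relations e→ and i→ on a set A, if strong postponement SP(e→, i→) holds (i.e. i→ · e→ ⊆ e→* · i→=), then e-factorization F(e→, i→) holds (i.e. (e→ ∪ i→)* ⊆ e→* · i→*). -/
/-!
Strong postponement lets a single `i`-step be pushed to the right through a whole `e*`-path while
staying a single (possibly vanishing) `i`-step. Pushing the steps of an `i*`-prefix through one
`e`-step in turn gives `i* · e ⊆ e* · i*`, and an induction along an `(e ∪ i)*`-path, moving each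
new `e`-step past the accumulated `i*`-suffix, yields the factorization.
-/

open Relation

def StrongPostponement {A : Type*} (e i : A → A → Prop) : Prop :=
  ∀ t u s, i t u → e u s → Comp (ReflTransGen e) (ReflGen i) t s

namespace StrongPostponement

variable {A : Type*} {e i : A → A → Prop}

/-- With `i*` in place of `i=` the induction along the `e*`-path would break down: `i=` ensures that
only one `i`-step is ever carried along. -/
theorem single_reflTransGen (SP : StrongPostponement e i) {t u s : A} (hi : i t u)
    (he : ReflTransGen e u s) : Comp (ReflTransGen e) (ReflGen i) t s := by
  induction he using ReflTransGen.head_induction_on generalizing t with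
  | refl => exact ⟨t, .refl, .single hi⟩
  | head huv hvs ih =>
    obtain ⟨w, htw, hw⟩ := SP t _ _ hi huv
    cases hw with
    | refl => exact ⟨s, htw.trans hvs, .refl⟩
    | single hwi =>
      obtain ⟨x, hwx, hxs⟩ := ih hwi
      exact ⟨x, htw.trans hwx, hxs⟩

theorem reflTransGen_single (SP : StrongPostponement e i) {t u s : A} (hi : ReflTransGen i t u)
    (he : e u s) : Comp (ReflTransGen e) (ReflTransGen i) t s := by
  induction hi using ReflTransGen.head_induction_on with
  | refl => exact ⟨s, .single he, .refl⟩
  | head htc _ ih =>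
    obtain ⟨v, hcv, hvs⟩ := ih
    obtain ⟨w, htw, hwv⟩ := SP.single_reflTransGen htc hcv
    exact ⟨w, htw, hwv.to_reflTransGen.trans hvs⟩

end StrongPostponement

/-- Hindley's strong postponement lemma: if `i→ · e→ ⊆ e→* · i→=`
(strong postponement `SP(e→, i→)`), then e-factorization `F(e→, i→)` holds:
`(e→ ∪ i→)* ⊆ e→* · i→*`. -/
theorem hindley_strong_postponement {A : Type*} (e i : A → A → Prop)
    (SP : ∀ t u s, i t u → e u s →
      Relation.Comp (Relation.ReflTransGen e) (Relation.ReflGen i) t s) :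
    ∀ t s, Relation.ReflTransGen (fun a b => e a b ∨ i a b) t s →
      Relation.Comp (Relation.ReflTransGen e) (Relation.ReflTransGen i) t s := by
  have hSP : StrongPostponement e i := SP
  intro t s h
  induction h with
  | refl => exact ⟨t, .refl, .refl⟩
  | tail _ hus ih =>
    obtain ⟨c, htc, hcu⟩ := ih
    rcases hus with he | hi
    · obtain ⟨w, hcw, hws⟩ := hSP.reflTransGen_single hcu he
      exact ⟨w, htc.trans hcw, hws⟩
    · exact ⟨c, htc, hcu.tail hi⟩
end

section
/- Characterization of factorization: for relations e→ and i→ on a set A, e-factorization F(e→, i→) holds if and only if there is a relation i⇒ on A such that i⇒* = i→* and strong postponement SP(e→, i⇒) holds. -/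
/-!
If every mixed reduction factors as `e→* · i→*`, then `i⇒ := i→*` is strongly postponable behind
`e→`, because an `i⇒ · e→` sequence is itself a mixed reduction. Conversely, strong
postponement of `i⇒` lets a whole `i⇒*` block be pushed past each `e→` step, one `i⇒` step at a
time, so every mixed reduction can be sorted into `e→* · i⇒*`, and `i⇒* = i→*`.
-/

namespace Relation

variable {α : Type*}

def Factorizes (e i : α → α → Prop) : Prop :=
  ∀ t s, ReflTransGen (fun a b => e a b ∨ i a b) t s → Comp (ReflTransGen e) (ReflTransGen i) t s

def StrongPostponement (e i : α → α → Prop) : Prop :=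
  ∀ t u s, i t u → e u s → Comp (ReflTransGen e) (ReflGen i) t s

theorem Factorizes.strongPostponement_reflTransGen {e i : α → α → Prop} (F : Factorizes e i) :
    StrongPostponement e (ReflTransGen i) := by
  intro t u s htu hus
  have hmixed : ReflTransGen (fun a b => e a b ∨ i a b) t s :=
    (ReflTransGen.mono (fun _ _ => Or.inr) _ _ htu).tail (Or.inl hus)
  obtain ⟨v, htv, hvs⟩ := F t s hmixed
  exact ⟨v, htv, ReflGen.single hvs⟩

namespace StrongPostponement

variable {e i : α → α → Prop}

theorem comp_of_step_of_reflTransGen (SP : StrongPostponement e i) {t u s : α}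
    (htu : i t u) (hus : ReflTransGen e u s) : Comp (ReflTransGen e) (ReflGen i) t s := by
  induction hus using ReflTransGen.head_induction_on generalizing t with
  | refl => exact ⟨t, .refl, .single htu⟩
  | head huv hvs ih =>
    obtain ⟨w, htw, hwv⟩ := SP _ _ _ htu huv
    cases hwv with
    | refl => exact ⟨_, htw.trans hvs, .refl⟩
    | single hwv =>
      obtain ⟨x, hwx, hxs⟩ := ih hwv
      exact ⟨x, htw.trans hwx, hxs⟩

theorem comp_of_reflTransGen_of_step (SP : StrongPostponement e i) {t u s : α}
    (htu : ReflTransGen i t u) (hus : e u s) : Comp (ReflTransGen e) (ReflTransGen i) t s := by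
  induction htu using ReflTransGen.head_induction_on with
  | refl => exact ⟨s, .single hus, .refl⟩
  | head htv hvu ih =>
    obtain ⟨w, hvw, hws⟩ := ih
    obtain ⟨x, htx, hxw⟩ := SP.comp_of_step_of_reflTransGen htv hvw
    exact ⟨x, htx, hxw.to_reflTransGen.trans hws⟩

theorem factorizes {i' : α → α → Prop} (SP : StrongPostponement e i')
    (hi' : ∀ t s, ReflTransGen i' t s ↔ ReflTransGen i t s) : Factorizes e i := by
  intro t s h
  induction h with
  | refl => exact ⟨t, .refl, .refl⟩
  | @tail b c _ hbc ih =>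
    obtain ⟨a, hta, hab⟩ := ih
    rcases hbc with he | hi
    · obtain ⟨x, hax, hxc⟩ := SP.comp_of_reflTransGen_of_step ((hi' a b).mpr hab) he
      exact ⟨x, hta.trans hax, (hi' x c).mp hxc⟩
    · exact ⟨a, hta, hab.tail hi⟩

end StrongPostponement

end Relation

/-- Characterization of factorization: e-factorization `F(e→, i→)` holds iff there is
a relation `i⇒` with `i⇒* = i→*` and strong postponement `SP(e→, i⇒)`. -/
theorem factorization_characterization {A : Type*} (e i : A → A → Prop) :
    (∀ t s, Relation.ReflTransGen (fun a b => e a b ∨ i a b) t s →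
        Relation.Comp (Relation.ReflTransGen e) (Relation.ReflTransGen i) t s)
    ↔
    (∃ ip : A → A → Prop,
      (∀ t s, Relation.ReflTransGen ip t s ↔ Relation.ReflTransGen i t s) ∧
      (∀ t u s, ip t u → e u s →
        Relation.Comp (Relation.ReflTransGen e) (Relation.ReflGen ip) t s)) := by
  constructor
  · intro F
    exact ⟨Relation.ReflTransGen i, fun t s => by rw [Relation.reflTransGen_eq_self],
      Relation.Factorizes.strongPostponement_reflTransGen F⟩
  · rintro ⟨ip, hip, SP⟩
    exact Relation.StrongPostponement.factorizes SP hip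
end

section
/- Normalization lemma: let → = e→ ∪ ¬e→ be a relation on a set A and let e→ be a strategy for → (i.e. e→ ⊆ → and e→ has the same normal forms as →). If (1) persistence holds: t ¬e→ t' implies t' is not →-normal, and (2) factorization holds: t →* u implies t e→* · ¬e→* u, then e→ is complete for → (t →* u with u →-normal implies t e→* u). If moreover (3) uniformity holds: every weakly e→-normalizing element is strongly e→-normalizing, then e→ is a normalizing strategy for → (whenever t →* u for some →-normal u, every maximal e→-sequence from t ends in a →-normal form). -/
/-!
Factorize `t →* u` as `t e→* v ¬e→* u`. By persistence no `¬e→`-step can end in the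
`→`-normal form `u`, so the `¬e→`-part is empty and `t e→* u`: this is completeness.
Since `u` is also `e→`-normal, `t` is weakly `e→`-normalizing, hence strongly so by
uniformity; and an `e→`-normal form is `→`-normal because `e→` is a strategy.
-/

/-- `a` is `r`-normal: no `r`-step from `a`. -/
def IsNormal {A : Type*} (r : A → A → Prop) (a : A) : Prop := ∀ b, ¬ r a b

/-- `a` is strongly `r`-normalizing: every `r`-sequence from `a` is finite. -/
def StronglyNormalizing {A : Type*} (r : A → A → Prop) (a : A) : Prop :=
  Acc (fun x y => r y x) a

theorem Relation.ReflTransGen.eq_of_not_target {A : Type*} {r : A → A → Prop} {p : A → Prop}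
    (hr : ∀ a b, r a b → ¬ p b) {a b : A} (hab : Relation.ReflTransGen r a b) (hb : p b) :
    a = b := by
  rcases Relation.ReflTransGen.cases_tail_iff r a b |>.mp hab with rfl | ⟨c, -, hcb⟩
  · rfl
  · exact absurd hb (hr c b hcb)

theorem reflTransGen_of_factorization_of_persistence {A : Type*} {e ne r : A → A → Prop}
    (hpersist : ∀ t t', ne t t' → ¬ IsNormal r t')
    (hfact : ∀ t u, Relation.ReflTransGen r t u →
        Relation.Comp (Relation.ReflTransGen e) (Relation.ReflTransGen ne) t u)
    {t u : A} (htu : Relation.ReflTransGen r t u) (hu : IsNormal r u) :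
    Relation.ReflTransGen e t u := by
  obtain ⟨v, htv, hvu⟩ := hfact t u htu
  rwa [← hvu.eq_of_not_target hpersist hu]

theorem normalization_lemma_general {A : Type*} (e ne r : A → A → Prop)
    (hstrategy : ∀ a, IsNormal e a ↔ IsNormal r a)
    (hpersist : ∀ t t', ne t t' → ¬ IsNormal r t')
    (hfact : ∀ t u, Relation.ReflTransGen r t u →
        Relation.Comp (Relation.ReflTransGen e) (Relation.ReflTransGen ne) t u) :
    (∀ t u, Relation.ReflTransGen r t u → IsNormal r u → Relation.ReflTransGen e t u)
    ∧
    ((∀ t, (∃ u, Relation.ReflTransGen e t u ∧ IsNormal e u) → StronglyNormalizing e t) →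
      ∀ t, (∃ u, Relation.ReflTransGen r t u ∧ IsNormal r u) →
        StronglyNormalizing e t ∧
        ∀ s, Relation.ReflTransGen e t s → IsNormal e s → IsNormal r s) := by
  have complete : ∀ t u, Relation.ReflTransGen r t u → IsNormal r u →
      Relation.ReflTransGen e t u := fun _ _ ↦
    reflTransGen_of_factorization_of_persistence hpersist hfact
  refine ⟨complete, fun huniform t ⟨u, htu, hu⟩ ↦ ⟨?_, fun s _ hs ↦ (hstrategy s).mp hs⟩⟩
  exact huniform t ⟨u, complete t u htu hu, (hstrategy u).mpr hu⟩

/-- Normalization lemma: let `→ = e→ ∪ ¬e→` and let `e→` be a strategy for `→`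
(same normal forms). If persistence and factorization hold, then `e→` is complete;
if moreover uniformity holds, then `e→` is normalizing: from any `→`-normalizable `t`,
every maximal `e→`-sequence ends in a (`→`-)normal form (in particular it is finite
and its e-normal endpoints are `→`-normal). -/
theorem normalization_lemma {A : Type*} (e ne r : A → A → Prop)
    (hsplit : ∀ a b, r a b ↔ e a b ∨ ne a b)
    (hstrategy : ∀ a, IsNormal e a ↔ IsNormal r a)
    (hpersist : ∀ t t', ne t t' → ¬ IsNormal r t')
    (hfact : ∀ t u, Relation.ReflTransGen r t u →
        Relation.Comp (Relation.ReflTransGen e) (Relation.ReflTransGen ne) t u) :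
    (∀ t u, Relation.ReflTransGen r t u → IsNormal r u → Relation.ReflTransGen e t u)
    ∧
    ((∀ t, (∃ u, Relation.ReflTransGen e t u ∧ IsNormal e u) → StronglyNormalizing e t) →
      ∀ t, (∃ u, Relation.ReflTransGen r t u ∧ IsNormal r u) →
        StronglyNormalizing e t ∧
        ∀ s, Relation.ReflTransGen e t s → IsNormal e s → IsNormal r s) :=
  normalization_lemma_general e ne r hstrategy hpersist hfact
end

section
/- Abstract factorization via parallel reductions: let → = e→ ∪ ¬e→ be a relation on a set A. Suppose there are relations ⇒ and ¬e⇒ on A such that (macro) ¬e→ ⊆ ¬e⇒ ⊆ ¬e→*, (merge) t ¬e⇒ · e→ s implies t ⇒ s, and (split) t ⇒ s implies t e→* · ¬e⇒ s. Then → e-factorizes: t →* s implies t e→* · ¬e→* s. -/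
/-! Merging a `¬e⇒`-step with a following `e`-step and splitting the result yields
`¬e⇒ · e→ ⊆ e→* · ¬e⇒`: parallel internal steps can be postponed past single `e`-steps, hence
past `e`-sequences, so every reduction sequence can be rearranged into `e→* · ¬e⇒*`.
Since `¬e⇒ ⊆ ¬e→*`, this is `e→* · ¬e→*`. -/

namespace Relation

variable {α : Type*} {r p : α → α → Prop}

theorem comp_reflTransGen_le_of_comp_le (h : Comp p r ≤ Comp (ReflTransGen r) p) :
    Comp p (ReflTransGen r) ≤ Comp (ReflTransGen r) p := by
  rintro a c ⟨b, hab, hbc⟩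
  induction hbc using ReflTransGen.head_induction_on generalizing a with
  | refl => exact ⟨a, .refl, hab⟩
  | head hbb' _ ih =>
    obtain ⟨d, had, hdb'⟩ := h _ _ ⟨_, hab, hbb'⟩
    obtain ⟨f, hdf, hfc⟩ := ih d hdb'
    exact ⟨f, had.trans hdf, hfc⟩

theorem reflTransGen_comp_reflTransGen_le_of_comp_le (h : Comp p r ≤ Comp (ReflTransGen r) p) :
    Comp (ReflTransGen p) (ReflTransGen r) ≤ Comp (ReflTransGen r) (ReflTransGen p) := by
  rintro a c ⟨b, hab, hbc⟩
  induction hab using ReflTransGen.head_induction_on with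
  | refl => exact ⟨c, hbc, .refl⟩
  | head haa' _ ih =>
    obtain ⟨d, ha'd, hdc⟩ := ih
    obtain ⟨f, haf, hfd⟩ := comp_reflTransGen_le_of_comp_le h _ _ ⟨_, haa', ha'd⟩
    exact ⟨f, haf, hdc.head hfd⟩

theorem reflTransGen_or_le_comp_of_comp_le (h : Comp p r ≤ Comp (ReflTransGen r) p) :
    ReflTransGen (fun a b => r a b ∨ p a b) ≤ Comp (ReflTransGen r) (ReflTransGen p) := by
  intro a c hac
  induction hac with
  | refl => exact ⟨a, .refl, .refl⟩
  | tail _ hbc ih =>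
    obtain ⟨d, had, hdb⟩ := ih
    rcases hbc with hr | hp
    · obtain ⟨f, hdf, hfc⟩ :=
        reflTransGen_comp_reflTransGen_le_of_comp_le h _ _ ⟨_, hdb, .single hr⟩
      exact ⟨f, had.trans hdf, hfc⟩
    · exact ⟨d, had, hdb.tail hp⟩

end Relation

/-- Abstract factorization via parallel reductions: let `→ = e→ ∪ ¬e→`.
If there are relations `⇒` (par) and `¬e⇒` (parin) satisfying macro, merge and
split, then `→` e-factorizes: `→* ⊆ e→* · ¬e→*`. -/
theorem abstract_factorization {A : Type*} (e ne par parin : A → A → Prop)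
    (macro₁ : ∀ t s, ne t s → parin t s)
    (macro₂ : ∀ t s, parin t s → Relation.ReflTransGen ne t s)
    (merge : ∀ t s, Relation.Comp parin e t s → par t s)
    (split : ∀ t s, par t s → Relation.Comp (Relation.ReflTransGen e) parin t s) :
    ∀ t s, Relation.ReflTransGen (fun a b => e a b ∨ ne a b) t s →
      Relation.Comp (Relation.ReflTransGen e) (Relation.ReflTransGen ne) t s := by
  have postpone : Relation.Comp parin e ≤ Relation.Comp (Relation.ReflTransGen e) parin :=
    fun t s hts => split t s (merge t s hts)
  intro t s hts
  have hts' : Relation.ReflTransGen (fun a b => e a b ∨ parin a b) t s :=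
    Relation.ReflTransGen.mono (fun a b => Or.imp_right (macro₁ a b)) t s hts
  obtain ⟨u, htu, hus⟩ := Relation.reflTransGen_or_le_comp_of_comp_le postpone t s hts'
  exact ⟨u, htu, Relation.reflTransGen_closed macro₂ u s hus⟩
end

section
/- Substitution lemma for the CbN and CbV translations: for all λ-terms t, u and every variable x, (1) t^n[u^n/x] = (t[u/x])^n; and (2) if u^v = !S for some bang-calculus term S (equivalently, u is a value), then t^v[S/x] = (t[u/x])^v. -/
namespace BangPaper

/-- λ-terms with operators `O`, each with arity `ar o`. -/
inductive Lam (O : Type) (ar : O → ℕ) : Type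
  | var : ℕ → Lam O ar
  | lam : ℕ → Lam O ar → Lam O ar
  | app : Lam O ar → Lam O ar → Lam O ar
  | op  : (o : O) → (Fin (ar o) → Lam O ar) → Lam O ar

/-- Terms of the bang calculus `Λ!O`. -/
inductive BT (O : Type) (ar : O → ℕ) : Type
  | var : ℕ → BT O ar
  | lam : ℕ → BT O ar → BT O ar
  | app : BT O ar → BT O ar → BT O ar
  | bang : BT O ar → BT O ar
  | op  : (o : O) → (Fin (ar o) → BT O ar) → BT O ar

variable {O : Type} {ar : O → ℕ}

/-- Values: variables and abstractions. -/
def Lam.isValue : Lam O ar → Prop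
  | .var _ => True
  | .lam _ _ => True
  | _ => False

/-- Substitution `t[u/x]` on λ-terms. -/
def Lam.subst : Lam O ar → ℕ → Lam O ar → Lam O ar
  | .var y, x, u => if y = x then u else .var y
  | .lam y t, x, u => if y = x then .lam y t else .lam y (Lam.subst t x u)
  | .app t s, x, u => .app (Lam.subst t x u) (Lam.subst s x u)
  | .op o ts, x, u => .op o (fun i => Lam.subst (ts i) x u)

/-- Substitution `T[S/x]` on bang-calculus terms. -/
def BT.subst : BT O ar → ℕ → BT O ar → BT O ar
  | .var y, x, u => if y = x then u else .var y
  | .lam y t, x, u => if y = x then .lam y t else .lam y (BT.subst t x u)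
  | .app t s, x, u => .app (BT.subst t x u) (BT.subst s x u)
  | .bang t, x, u => .bang (BT.subst t x u)
  | .op o ts, x, u => .op o (fun i => BT.subst (ts i) x u)

/-- One-hole contexts for λ-terms. -/
inductive LCtx (O : Type) (ar : O → ℕ) : Type
  | hole : LCtx O ar
  | lam  : ℕ → LCtx O ar → LCtx O ar
  | appL : LCtx O ar → Lam O ar → LCtx O ar
  | appR : Lam O ar → LCtx O ar → LCtx O ar
  | op   : (o : O) → (Fin (ar o) → Lam O ar) → Fin (ar o) → LCtx O ar → LCtx O ar

/-- One-hole contexts for bang-calculus terms. -/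
inductive BCtx (O : Type) (ar : O → ℕ) : Type
  | hole : BCtx O ar
  | lam  : ℕ → BCtx O ar → BCtx O ar
  | appL : BCtx O ar → BT O ar → BCtx O ar
  | appR : BT O ar → BCtx O ar → BCtx O ar
  | bang : BCtx O ar → BCtx O ar
  | op   : (o : O) → (Fin (ar o) → BT O ar) → Fin (ar o) → BCtx O ar → BCtx O ar

/-- Plugging a λ-term in a λ-context. -/
def LCtx.plug : LCtx O ar → Lam O ar → Lam O ar
  | .hole, t => t
  | .lam x c, t => .lam x (LCtx.plug c t)
  | .appL c s, t => .app (LCtx.plug c t) s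
  | .appR s c, t => .app s (LCtx.plug c t)
  | .op o ts i c, t => .op o (Function.update ts i (LCtx.plug c t))

/-- CbN level of a λ-context. -/
def LCtx.levN : LCtx O ar → ℕ
  | .hole => 0
  | .lam _ c => LCtx.levN c
  | .appL c _ => LCtx.levN c
  | .appR _ c => LCtx.levN c + 1
  | .op _ _ _ c => LCtx.levN c + 1

/-- CbV level of a λ-context. -/
def LCtx.levV : LCtx O ar → ℕ
  | .hole => 0
  | .lam _ c => LCtx.levV c + 1
  | .appL (.lam _ c') _ => LCtx.levV c'
  | .appL c _ => LCtx.levV c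
  | .appR _ c => LCtx.levV c
  | .op _ _ _ c => LCtx.levV c + 1

/-- Plugging a bang-term in a bang-context. -/
def BCtx.plug : BCtx O ar → BT O ar → BT O ar
  | .hole, t => t
  | .lam x c, t => .lam x (BCtx.plug c t)
  | .appL c s, t => .app (BCtx.plug c t) s
  | .appR s c, t => .app s (BCtx.plug c t)
  | .bang c, t => .bang (BCtx.plug c t)
  | .op o ts i c, t => .op o (Function.update ts i (BCtx.plug c t))

/-- Bang-calculus level of a context. -/
def BCtx.lev : BCtx O ar → ℕ
  | .hole => 0
  | .lam _ c => BCtx.lev c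
  | .appL c _ => BCtx.lev c
  | .appR _ c => BCtx.lev c
  | .bang c => BCtx.lev c + 1
  | .op _ _ _ c => BCtx.lev c + 1

/-- Contextual closure of a root rule on λ-terms. -/
def Lam.Step (root : Lam O ar → Lam O ar → Prop) (t s : Lam O ar) : Prop :=
  ∃ (c : LCtx O ar) (a b : Lam O ar), root a b ∧ t = c.plug a ∧ s = c.plug b

/-- Step at level `k` (w.r.t. a level function `lev` on λ-contexts). -/
def Lam.StepAt (lev : LCtx O ar → ℕ) (root : Lam O ar → Lam O ar → Prop)
    (k : ℕ) (t s : Lam O ar) : Prop :=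
  ∃ (c : LCtx O ar) (a b : Lam O ar), root a b ∧ t = c.plug a ∧ s = c.plug b ∧ lev c = k

/-- Least level of a λ-term w.r.t. a redex set `Red` and level function `lev`. -/
noncomputable def Lam.ll (lev : LCtx O ar → ℕ) (Red : Lam O ar → Prop) (t : Lam O ar) : ℕ∞ :=
  sInf { n : ℕ∞ | ∃ (c : LCtx O ar) (r : Lam O ar), Red r ∧ t = c.plug r ∧ (lev c : ℕ∞) = n }

/-- Least-level step. -/
def Lam.LLStep (lev : LCtx O ar → ℕ) (Red : Lam O ar → Prop)
    (root : Lam O ar → Lam O ar → Prop) (t s : Lam O ar) : Prop :=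
  ∃ k : ℕ, Lam.StepAt lev root k t s ∧ (k : ℕ∞) = Lam.ll lev Red t

/-- Internal (non-least-level) step. -/
def Lam.InStep (lev : LCtx O ar → ℕ) (Red : Lam O ar → Prop)
    (root : Lam O ar → Lam O ar → Prop) (t s : Lam O ar) : Prop :=
  ∃ k : ℕ, Lam.StepAt lev root k t s ∧ Lam.ll lev Red t < (k : ℕ∞)

/-- Contextual closure of a root rule on bang-terms. -/
def BT.Step (root : BT O ar → BT O ar → Prop) (t s : BT O ar) : Prop :=
  ∃ (c : BCtx O ar) (a b : BT O ar), root a b ∧ t = c.plug a ∧ s = c.plug b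

/-- Step at level `k` in the bang calculus. -/
def BT.StepAt (root : BT O ar → BT O ar → Prop) (k : ℕ) (t s : BT O ar) : Prop :=
  ∃ (c : BCtx O ar) (a b : BT O ar), root a b ∧ t = c.plug a ∧ s = c.plug b ∧ c.lev = k

/-- Least level of a bang-term w.r.t. a redex set `Red`. -/
noncomputable def BT.ll (Red : BT O ar → Prop) (t : BT O ar) : ℕ∞ :=
  sInf { n : ℕ∞ | ∃ (c : BCtx O ar) (r : BT O ar), Red r ∧ t = c.plug r ∧ (c.lev : ℕ∞) = n }

/-- Least-level step in the bang calculus. -/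
def BT.LLStep (Red : BT O ar → Prop) (root : BT O ar → BT O ar → Prop)
    (t s : BT O ar) : Prop :=
  ∃ k : ℕ, BT.StepAt root k t s ∧ (k : ℕ∞) = BT.ll Red t

/-- Internal (non-least-level) step in the bang calculus. -/
def BT.InStep (Red : BT O ar → Prop) (root : BT O ar → BT O ar → Prop)
    (t s : BT O ar) : Prop :=
  ∃ k : ℕ, BT.StepAt root k t s ∧ BT.ll Red t < (k : ℕ∞)

/-- β-rule: `(λx.t)s ↦β t[s/x]`. -/
def betaRoot : Lam O ar → Lam O ar → Prop := fun a b =>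
  ∃ x t s, a = Lam.app (Lam.lam x t) s ∧ b = Lam.subst t x s

/-- β-redexes. -/
def betaRedex : Lam O ar → Prop := fun a => ∃ x t s, a = Lam.app (Lam.lam x t) s

/-- βv-rule: `(λx.t)V ↦βv t[V/x]` for `V` a value. -/
def betavRoot : Lam O ar → Lam O ar → Prop := fun a b =>
  ∃ x t v, Lam.isValue v ∧ a = Lam.app (Lam.lam x t) v ∧ b = Lam.subst t x v

/-- βv-redexes. -/
def betavRedex : Lam O ar → Prop := fun a => ∃ x t v, Lam.isValue v ∧ a = Lam.app (Lam.lam x t) v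

/-- !β-rule: `(λx.T)(!S) ↦!β T[S/x]`. -/
def bbetaRoot : BT O ar → BT O ar → Prop := fun a b =>
  ∃ x T S, a = BT.app (BT.lam x T) (BT.bang S) ∧ b = BT.subst T x S

/-- !β-redexes. -/
def bbetaRedex : BT O ar → Prop := fun a => ∃ x T S, a = BT.app (BT.lam x T) (BT.bang S)

/-- `der := λx.x`. -/
def der : BT O ar := BT.lam 0 (BT.var 0)

/-- d-rule: `der(!T) ↦d T`. -/
def dRoot : BT O ar → BT O ar → Prop := fun a b => a = BT.app der (BT.bang b)

/-- CbN translation of λ-terms into the bang calculus. -/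
def cbn : Lam O ar → BT O ar
  | .var x => .var x
  | .lam x t => .lam x (cbn t)
  | .app t s => .app (cbn t) (.bang (cbn s))
  | .op o ts => .op o (fun i => cbn (ts i))

/-- CbV translation of λ-terms into the bang calculus. -/
def cbv : Lam O ar → BT O ar
  | .var x => .bang (.var x)
  | .lam x t => .bang (.lam x (cbv t))
  | .app t s =>
      match cbv t with
      | .bang T => .app T (cbv s)
      | T => .app (.app der T) (cbv s)
  | .op o ts => .op o (fun i => cbv (ts i))

/-- CbN translation of λ-contexts into bang-contexts. -/
def cbnCtx : LCtx O ar → BCtx O ar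
  | .hole => .hole
  | .lam x c => .lam x (cbnCtx c)
  | .appL c t => .appL (cbnCtx c) (.bang (cbn t))
  | .appR t c => .appR (cbn t) (.bang (cbnCtx c))
  | .op o ts i c => .op o (fun j => cbn (ts j)) i (cbnCtx c)

/-- CbV translation of λ-contexts into bang-contexts. -/
def cbvCtx : LCtx O ar → BCtx O ar
  | .hole => .hole
  | .lam x c => .bang (.lam x (cbvCtx c))
  | .appL c t =>
      match cbvCtx c with
      | .bang C => .appL C (cbv t)
      | C => .appL (.appR der C) (cbv t)
  | .appR t c =>
      match cbv t with
      | .bang T => .appR T (cbvCtx c)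
      | T => .appR (.app der T) (cbvCtx c)
  | .op o ts i c => .op o (fun j => cbv (ts j)) i (cbvCtx c)

/-- `a` is `r`-normal: no `r`-step from `a`. -/
def Normal {α : Type*} (r : α → α → Prop) (a : α) : Prop := ∀ b, ¬ r a b

/-- `a` is strongly `r`-normalizing. -/
def SN {α : Type*} (r : α → α → Prop) (a : α) : Prop := Acc (fun x y => r y x) a

/-- `e` is a normalizing strategy for `r`: it has the same normal forms as `r`, and
from every `r`-normalizable term every maximal `e`-sequence ends in a normal form
(i.e. it cannot be extended infinitely). -/
def NormalizingStrategy {α : Type*} (r e : α → α → Prop) : Prop :=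
  (∀ a, Normal e a ↔ Normal r a) ∧
  ∀ t u, Relation.ReflTransGen r t u → Normal r u → SN e t

/-- Redex set of `→!β ∪ →O` for a family of operator rules. -/
def BT.RedSet (rules : O → BT O ar → BT O ar → Prop) : BT O ar → Prop :=
  fun A => bbetaRedex A ∨ ∃ o B, rules o A B

/-- Step at level `k` of the compound reduction `→!β ∪ →O`. -/
def BT.FullAt (rules : O → BT O ar → BT O ar → Prop) (k : ℕ) (T S : BT O ar) : Prop :=
  BT.StepAt bbetaRoot k T S ∨ ∃ o, BT.StepAt (rules o) k T S

/-- The compound reduction `→!β ∪ →O` of the bang calculus. -/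
def BT.Full (rules : O → BT O ar → BT O ar → Prop) (T S : BT O ar) : Prop :=
  ∃ k, BT.FullAt rules k T S

/-- Least-level step of `→!β ∪ →O`. -/
def BT.FullLL (rules : O → BT O ar → BT O ar → Prop) (T S : BT O ar) : Prop :=
  ∃ k : ℕ, BT.FullAt rules k T S ∧ (k : ℕ∞) = BT.ll (BT.RedSet rules) T

/-- Internal step of `→!β ∪ →O`. -/
def BT.FullIn (rules : O → BT O ar → BT O ar → Prop) (T S : BT O ar) : Prop :=
  ∃ k : ℕ, BT.FullAt rules k T S ∧ BT.ll (BT.RedSet rules) T < (k : ℕ∞)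

/-- Redex set of `→base ∪ →O` on λ-terms. -/
def Lam.RedSet (base : Lam O ar → Prop) (rules : O → Lam O ar → Lam O ar → Prop) :
    Lam O ar → Prop :=
  fun a => base a ∨ ∃ o b, rules o a b

/-- Step at level `k` of the compound reduction `→root ∪ →O` on λ-terms. -/
def Lam.FullAt (lev : LCtx O ar → ℕ) (root : Lam O ar → Lam O ar → Prop)
    (rules : O → Lam O ar → Lam O ar → Prop) (k : ℕ) (t s : Lam O ar) : Prop :=
  Lam.StepAt lev root k t s ∨ ∃ o, Lam.StepAt lev (rules o) k t s

/-- Compound reduction `→root ∪ →O` on λ-terms. -/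
def Lam.Full (lev : LCtx O ar → ℕ) (root : Lam O ar → Lam O ar → Prop)
    (rules : O → Lam O ar → Lam O ar → Prop) (t s : Lam O ar) : Prop :=
  ∃ k, Lam.FullAt lev root rules k t s

/-- Least-level step of the compound reduction on λ-terms. -/
def Lam.FullLL (lev : LCtx O ar → ℕ) (base : Lam O ar → Prop)
    (root : Lam O ar → Lam O ar → Prop)
    (rules : O → Lam O ar → Lam O ar → Prop) (t s : Lam O ar) : Prop :=
  ∃ k : ℕ, Lam.FullAt lev root rules k t s ∧ (k : ℕ∞) = Lam.ll lev (Lam.RedSet base rules) t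

/-- Internal step of the compound reduction on λ-terms. -/
def Lam.FullIn (lev : LCtx O ar → ℕ) (base : Lam O ar → Prop)
    (root : Lam O ar → Lam O ar → Prop)
    (rules : O → Lam O ar → Lam O ar → Prop) (t s : Lam O ar) : Prop :=
  ∃ k : ℕ, Lam.FullAt lev root rules k t s ∧ Lam.ll lev (Lam.RedSet base rules) t < (k : ℕ∞)

/-!
Both translations are compositional and substitution is structural, so both identities follow by
induction on `t`. The one delicate case is a CbV application `t s`, whose translation depends on
whether `t^v` is a `!`-term. Substituting into a term can make it a `!`-term only if the term is a
variable, and `t^v` never is, so `(t[u/x])^v` takes the same shape as `t^v`.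
-/

lemma BT.subst_der (x : ℕ) (S : BT O ar) : BT.subst der x S = der := by
  unfold der BT.subst
  split_ifs with h
  · rfl
  · simp only [BT.subst, if_neg h]

def cbvApp : BT O ar → BT O ar → BT O ar
  | .bang T, S => .app T S
  | T, S => .app (.app der T) S

lemma cbv_app (t s : Lam O ar) : cbv (.app t s) = cbvApp (cbv t) (cbv s) := by
  rw [cbv]
  cases cbv t <;> rfl

lemma cbv_ne_var (t : Lam O ar) (y : ℕ) : cbv t ≠ .var y := by
  cases t with
  | app t s => rw [cbv_app]; cases cbv t <;> simp [cbvApp]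
  | _ => simp [cbv]

lemma BT.subst_cbvApp {T : BT O ar} (hT : ∀ y, T ≠ .var y) (R : BT O ar) (x : ℕ)
    (S : BT O ar) : (cbvApp T R).subst x S = cbvApp (T.subst x S) (R.subst x S) := by
  cases T with
  | var y => exact absurd rfl (hT y)
  | lam y B => simp only [cbvApp, BT.subst, BT.subst_der]; split_ifs <;> rfl
  | _ => simp [cbvApp, BT.subst, BT.subst_der]

theorem cbn_subst (t u : Lam O ar) (x : ℕ) :
    (cbn t).subst x (cbn u) = cbn (t.subst x u) := by
  induction t with
  | var y => simp only [cbn, BT.subst, Lam.subst]; split_ifs <;> rfl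
  | lam y b ih => simp only [cbn, BT.subst, Lam.subst]; split_ifs <;> simp [cbn, ih]
  | app a b iha ihb => simp [cbn, BT.subst, Lam.subst, iha, ihb]
  | op o ts ih => simp [cbn, BT.subst, Lam.subst, ih]

theorem cbv_subst (t u : Lam O ar) (x : ℕ) (S : BT O ar) (hS : cbv u = .bang S) :
    (cbv t).subst x S = cbv (t.subst x u) := by
  induction t with
  | var y => simp only [cbv, BT.subst, Lam.subst]; split_ifs <;> simp [hS, cbv]
  | lam y b ih => simp only [cbv, BT.subst, Lam.subst]; split_ifs <;> simp [cbv, ih]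
  | app a b iha ihb =>
    simp only [Lam.subst, cbv_app, BT.subst_cbvApp (cbv_ne_var a), iha, ihb]
  | op o ts ih => simp [cbv, BT.subst, Lam.subst, ih]

/-- Substitution lemma for the CbN and CbV translations. -/
theorem substitution_lemma {O : Type} {ar : O → ℕ} (t u : Lam O ar) (x : ℕ) :
    (BT.subst (cbn t) x (cbn u) = cbn (Lam.subst t x u)) ∧
    (∀ S : BT O ar, cbv u = BT.bang S → BT.subst (cbv t) x S = cbv (Lam.subst t x u)) :=
  ⟨cbn_subst t u x, cbv_subst t u x⟩

end BangPaper
end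

section
/- Preservation of normal forms by the CbN and CbV translations: for every λ-term t and every operator o ∈ O: (CbN) t is →β-normal iff t^n is →!β-normal, and t is →o-normal iff t^n is →o-normal; (CbV) t is →βv-normal iff t^v is →!β-normal, and t is →o-normal iff t^v is →o-normal. -/
namespace BangPaper

variable {O : Type} {ar : O → ℕ}

/-!
Being normal means containing no redex occurrence. Both translations commute with plugging
into contexts (`cbvCtx` only when the plugged term is not a value, whose translation is a box
that the application case unwraps), so a redex occurrence in `t` yields one in its translation.
Conversely, every subterm of a translation is either the translation of a subterm of `t` or
inert: a variable, an abstraction, a box, or `der` applied to a non-box, where neither `!β` nor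
an operator rule can fire. It remains to match redexes at the root: `(λx.T)(!S)` is the CbN
image of `(λx.t)s` and the CbV image of `(λx.t)V` with `V` a value, since `cbv V` is a box
exactly for values.
-/

inductive BT.IsSubterm : BT O ar → BT O ar → Prop
  | refl (T : BT O ar) : BT.IsSubterm T T
  | lam (x : ℕ) {A T : BT O ar} : BT.IsSubterm A T → BT.IsSubterm A (.lam x T)
  | appL {A T : BT O ar} (S : BT O ar) : BT.IsSubterm A T → BT.IsSubterm A (.app T S)
  | appR (T : BT O ar) {A S : BT O ar} : BT.IsSubterm A S → BT.IsSubterm A (.app T S)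
  | bang {A T : BT O ar} : BT.IsSubterm A T → BT.IsSubterm A (.bang T)
  | op (o : O) (Ts : Fin (ar o) → BT O ar) (i : Fin (ar o)) {A : BT O ar} :
      BT.IsSubterm A (Ts i) → BT.IsSubterm A (.op o Ts)

inductive Lam.IsSubterm : Lam O ar → Lam O ar → Prop
  | refl (t : Lam O ar) : Lam.IsSubterm t t
  | lam (x : ℕ) {a t : Lam O ar} : Lam.IsSubterm a t → Lam.IsSubterm a (.lam x t)
  | appL {a t : Lam O ar} (s : Lam O ar) : Lam.IsSubterm a t → Lam.IsSubterm a (.app t s)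
  | appR (t : Lam O ar) {a s : Lam O ar} : Lam.IsSubterm a s → Lam.IsSubterm a (.app t s)
  | op (o : O) (ts : Fin (ar o) → Lam O ar) (i : Fin (ar o)) {a : Lam O ar} :
      Lam.IsSubterm a (ts i) → Lam.IsSubterm a (.op o ts)

theorem Lam.IsSubterm.exists_plug {a t : Lam O ar} (h : a.IsSubterm t) :
    ∃ c : LCtx O ar, t = c.plug a := by
  induction h with
  | refl t => exact ⟨.hole, rfl⟩
  | lam x _ ih => obtain ⟨c, rfl⟩ := ih; exact ⟨.lam x c, rfl⟩
  | appL s _ ih => obtain ⟨c, rfl⟩ := ih; exact ⟨.appL c s, rfl⟩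
  | appR s _ ih => obtain ⟨c, rfl⟩ := ih; exact ⟨.appR s c, rfl⟩
  | op o ts i _ ih =>
    obtain ⟨c, hc⟩ := ih
    exact ⟨.op o ts i c, by simp [LCtx.plug, ← hc]⟩

theorem BCtx.isSubterm_plug (C : BCtx O ar) (A : BT O ar) : A.IsSubterm (C.plug A) := by
  induction C with
  | hole => exact .refl A
  | lam x C ih => exact .lam x ih
  | appL C S ih => exact .appL S ih
  | appR S C ih => exact .appR S ih
  | bang C ih => exact .bang ih
  | op o Ts i C ih => exact .op o _ i (by rwa [Function.update_self])

theorem cbv_app_of_eq_bang {t s : Lam O ar} {T : BT O ar} (h : cbv t = .bang T) :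
    cbv (.app t s) = .app T (cbv s) := by
  simp only [cbv, h]

theorem cbv_app_of_ne_bang {t s : Lam O ar} (h : ∀ T, cbv t ≠ .bang T) :
    cbv (.app t s) = .app (.app der (cbv t)) (cbv s) := by
  rw [cbv.eq_3]
  split
  · exact absurd ‹_› (h _)
  · rfl

theorem cbv_app_ne_bang (t s : Lam O ar) (T : BT O ar) : cbv (.app t s) ≠ .bang T := by
  by_cases h : ∃ T, cbv t = .bang T
  · obtain ⟨T, h⟩ := h
    simp [cbv_app_of_eq_bang h]
  · push Not at h
    simp [cbv_app_of_ne_bang h]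

theorem cbn_plug (c : LCtx O ar) (a : Lam O ar) :
    cbn (c.plug a) = (cbnCtx c).plug (cbn a) := by
  induction c with
  | hole => rfl
  | lam x c ih => simp [LCtx.plug, cbn, cbnCtx, BCtx.plug, ih]
  | appL c s ih => simp [LCtx.plug, cbn, cbnCtx, BCtx.plug, ih]
  | appR s c ih => simp [LCtx.plug, cbn, cbnCtx, BCtx.plug, ih]
  | op o ts i c ih =>
    simp only [LCtx.plug, cbn, cbnCtx, BCtx.plug, ← ih]
    congr 1
    funext j
    exact Function.apply_update (fun _ => cbn) ts i _ j

theorem cbv_plug (c : LCtx O ar) {a : Lam O ar} (ha : ∀ T, cbv a ≠ .bang T) :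
    cbv (c.plug a) = (cbvCtx c).plug (cbv a) := by
  induction c with
  | hole => rfl
  | lam x c ih => simp [LCtx.plug, cbv, cbvCtx, BCtx.plug, ih]
  | appL c s ih =>
    simp only [LCtx.plug, cbvCtx]
    generalize cbvCtx c = C at ih ⊢
    cases C <;> simp only [BCtx.plug] at ih
    case bang C => rw [cbv_app_of_eq_bang ih]; rfl
    all_goals rw [cbv_app_of_ne_bang (by simp [ih, ha]), ih]; rfl
  | appR s c ih =>
    simp only [LCtx.plug, cbvCtx]
    by_cases hs : ∃ T, cbv s = .bang T
    · obtain ⟨T, hT⟩ := hs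
      simp [cbv_app_of_eq_bang hT, hT, BCtx.plug, ih]
    · push Not at hs
      rw [cbv_app_of_ne_bang hs]
      split
      · exact absurd ‹_› (hs _)
      · simp [BCtx.plug, ih]
  | op o ts i c ih =>
    simp only [LCtx.plug, cbv, cbvCtx, BCtx.plug, ← ih]
    congr 1
    funext j
    exact Function.apply_update (fun _ => cbv) ts i _ j

def BT.Inert (A : BT O ar) : Prop := ¬ bbetaRedex A ∧ ∀ o Ts, A ≠ .op o Ts

theorem BT.inert_var (x : ℕ) : (BT.var x : BT O ar).Inert := by simp [BT.Inert, bbetaRedex]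

theorem BT.inert_lam (x : ℕ) (T : BT O ar) : (BT.lam x T).Inert := by simp [BT.Inert, bbetaRedex]

theorem BT.inert_bang (T : BT O ar) : (BT.bang T).Inert := by simp [BT.Inert, bbetaRedex]

theorem BT.inert_app_of_ne_bang (T : BT O ar) {U : BT O ar} (hU : ∀ S, U ≠ .bang S) :
    (BT.app T U).Inert := by
  simp [BT.Inert, bbetaRedex, hU]

theorem BT.IsSubterm.eq_cbn_or_inert {A : BT O ar} {t : Lam O ar} (h : A.IsSubterm (cbn t)) :
    (∃ s, s.IsSubterm t ∧ A = cbn s) ∨ A.Inert := by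
  induction t with
  | var x =>
    cases h
    exact .inl ⟨_, .refl _, rfl⟩
  | lam x t ih =>
    cases h with
    | refl => exact .inl ⟨_, .refl _, rfl⟩
    | lam _ h => exact (ih h).imp_left (Exists.imp fun _ => And.imp_left (·.lam x))
  | app t₁ t₂ ih₁ ih₂ =>
    cases h with
    | refl => exact .inl ⟨_, .refl _, rfl⟩
    | appL _ h => exact (ih₁ h).imp_left (Exists.imp fun _ => And.imp_left (·.appL t₂))
    | appR _ h =>
      cases h with
      | refl => exact .inr (BT.inert_bang _)
      | bang h => exact (ih₂ h).imp_left (Exists.imp fun _ => And.imp_left (·.appR t₁))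
  | op o ts ih =>
    cases h with
    | refl => exact .inl ⟨_, .refl _, rfl⟩
    | op _ _ i h => exact (ih i h).imp_left (Exists.imp fun _ => And.imp_left (·.op o ts i))

theorem BT.IsSubterm.eq_cbv_or_inert {A : BT O ar} {t : Lam O ar} (h : A.IsSubterm (cbv t)) :
    (∃ s, s.IsSubterm t ∧ A = cbv s) ∨ A.Inert := by
  induction t with
  | var x =>
    cases h with
    | refl => exact .inl ⟨_, .refl _, rfl⟩
    | bang h => cases h; exact .inr (BT.inert_var x)
  | lam x t ih =>
    cases h with
    | refl => exact .inl ⟨_, .refl _, rfl⟩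
    | bang h =>
      cases h with
      | refl => exact .inr (BT.inert_lam _ _)
      | lam _ h => exact (ih h).imp_left (Exists.imp fun _ => And.imp_left (·.lam x))
  | app t₁ t₂ ih₁ ih₂ =>
    have lift₁ := fun (h : A.IsSubterm (cbv t₁)) =>
      (ih₁ h).imp_left (Exists.imp fun _ => And.imp_left (·.appL t₂))
    have lift₂ := fun (h : A.IsSubterm (cbv t₂)) =>
      (ih₂ h).imp_left (Exists.imp fun _ => And.imp_left (·.appR t₁))
    by_cases h₁ : ∃ T, cbv t₁ = .bang T
    · obtain ⟨T, hT⟩ := h₁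
      rw [cbv_app_of_eq_bang hT] at h
      cases h with
      | refl => exact .inl ⟨_, .refl _, (cbv_app_of_eq_bang hT).symm⟩
      | appL _ h => exact lift₁ (hT ▸ h.bang)
      | appR _ h => exact lift₂ h
    · push Not at h₁
      rw [cbv_app_of_ne_bang h₁] at h
      cases h with
      | refl => exact .inl ⟨_, .refl _, (cbv_app_of_ne_bang h₁).symm⟩
      | appR _ h => exact lift₂ h
      | appL _ h =>
        cases h with
        | refl => exact .inr (BT.inert_app_of_ne_bang _ h₁)
        | appR _ h => exact lift₁ h
        | appL _ h =>
          unfold der at h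
          cases h with
          | refl => exact .inr (BT.inert_lam _ _)
          | lam _ h => cases h; exact .inr (BT.inert_var _)
  | op o ts ih =>
    cases h with
    | refl => exact .inl ⟨_, .refl _, rfl⟩
    | op _ _ i h => exact (ih i h).imp_left (Exists.imp fun _ => And.imp_left (·.op o ts i))

theorem exists_cbv_eq_bang_iff (t : Lam O ar) : (∃ T, cbv t = .bang T) ↔ t.isValue := by
  cases t with
  | var x => simp [cbv, Lam.isValue]
  | lam x t => simp [cbv, Lam.isValue]
  | app t s => simp [cbv_app_ne_bang, Lam.isValue]
  | op o ts => simp [cbv, Lam.isValue]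

theorem exists_bbetaRoot_cbn_iff (a : Lam O ar) :
    (∃ B, bbetaRoot (cbn a) B) ↔ ∃ b, betaRoot a b := by
  constructor
  · rintro ⟨_, x, T, S, h, -⟩
    rcases a with _ | _ | ⟨_ | ⟨_, t⟩ | _ | _, s⟩ | _ <;> simp [cbn] at h
    exact ⟨_, x, t, s, by rw [h.1.1], rfl⟩
  · rintro ⟨_, x, t, s, rfl, rfl⟩
    exact ⟨_, x, cbn t, cbn s, rfl, rfl⟩

theorem exists_bbetaRoot_cbv_iff (a : Lam O ar) :
    (∃ B, bbetaRoot (cbv a) B) ↔ ∃ b, betavRoot a b := by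
  constructor
  · rintro ⟨_, x, T, S, h, -⟩
    cases a with
    | app t₁ t₂ =>
      by_cases h₁ : ∃ T, cbv t₁ = .bang T
      · obtain ⟨T₁, hT₁⟩ := h₁
        rw [cbv_app_of_eq_bang hT₁] at h
        obtain ⟨rfl, hS⟩ := BT.app.inj h
        have hv : t₂.isValue := (exists_cbv_eq_bang_iff t₂).1 ⟨S, hS⟩
        cases t₁ with
        | lam y t =>
          obtain ⟨rfl, -⟩ : y = x ∧ cbv t = T := by simpa [cbv] using hT₁
          exact ⟨_, y, t, t₂, hv, rfl, rfl⟩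
        | app => exact absurd hT₁ (cbv_app_ne_bang _ _ _)
        | _ => simp [cbv] at hT₁
      · push Not at h₁
        simp [cbv_app_of_ne_bang h₁, der] at h
    | _ => simp [cbv] at h
  · rintro ⟨_, x, t, v, hv, rfl, rfl⟩
    obtain ⟨V, hV⟩ := (exists_cbv_eq_bang_iff v).2 hv
    exact ⟨_, x, cbv t, V, by rw [cbv_app_of_eq_bang rfl, hV], rfl⟩

theorem BT.Inert.not_bbetaRoot {A B : BT O ar} (hA : A.Inert) : ¬ bbetaRoot A B :=
  fun ⟨x, T, S, h, _⟩ => hA.1 ⟨x, T, S, h⟩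

theorem BT.Inert.not_of_op_shape {o : O} {R : BT O ar → BT O ar → Prop}
    (hshape : ∀ A B, R A B → ∃ Ts, A = .op o Ts) {A B : BT O ar} (hA : A.Inert) : ¬ R A B :=
  fun h => let ⟨Ts, e⟩ := hshape A B h; hA.2 o Ts e

theorem normal_step_iff_of_translation {r : Lam O ar → Lam O ar → Prop}
    {R : BT O ar → BT O ar → Prop} {τ : Lam O ar → BT O ar} {τCtx : LCtx O ar → BCtx O ar}
    {J : BT O ar → Prop}
    (hplug : ∀ c a, ¬ J (τ a) → τ (c.plug a) = (τCtx c).plug (τ a))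
    (hsubterm : ∀ {A t}, A.IsSubterm (τ t) → (∃ s, s.IsSubterm t ∧ A = τ s) ∨ J A)
    (hJ : ∀ {A B}, J A → ¬ R A B)
    (hredex : ∀ a, (∃ B, R (τ a) B) ↔ ∃ b, r a b) (t : Lam O ar) :
    Normal (Lam.Step r) t ↔ Normal (BT.Step R) (τ t) := by
  constructor
  · rintro ht _ ⟨C, A, B, hAB, hC, -⟩
    rcases hsubterm (hC ▸ C.isSubterm_plug A) with ⟨s, hs, rfl⟩ | hA
    · obtain ⟨b, hb⟩ := (hredex s).1 ⟨B, hAB⟩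
      obtain ⟨c, rfl⟩ := hs.exists_plug
      exact ht _ ⟨c, s, b, hb, rfl, rfl⟩
    · exact hJ hA hAB
  · rintro hT _ ⟨c, a, b, hab, rfl, -⟩
    obtain ⟨B, hB⟩ := (hredex a).2 ⟨b, hab⟩
    exact hT _ ⟨τCtx c, τ a, B, hB, hplug c a fun hJa => hJ hJa hB, rfl⟩

theorem exists_rel_translate_iff {α β : Type*} {r : α → α → Prop} {R : β → β → Prop}
    {τ : α → β} (sound : ∀ a b, r a b → R (τ a) (τ b))
    (complete : ∀ a B, R (τ a) B → ∃ b, B = τ b ∧ r a b) (a : α) :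
    (∃ B, R (τ a) B) ↔ ∃ b, r a b :=
  ⟨fun ⟨B, h⟩ => (complete a B h).imp fun _ => And.right,
    fun ⟨b, h⟩ => ⟨_, sound a b h⟩⟩

theorem normal_step_iff_cbn {r : Lam O ar → Lam O ar → Prop} {R : BT O ar → BT O ar → Prop}
    (hinert : ∀ {A B}, BT.Inert A → ¬ R A B)
    (hredex : ∀ a, (∃ B, R (cbn a) B) ↔ ∃ b, r a b) (t : Lam O ar) :
    Normal (Lam.Step r) t ↔ Normal (BT.Step R) (cbn t) :=
  normal_step_iff_of_translation (fun c a _ => cbn_plug c a) BT.IsSubterm.eq_cbn_or_inert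
    hinert hredex t

theorem normal_step_iff_cbv {r : Lam O ar → Lam O ar → Prop} {R : BT O ar → BT O ar → Prop}
    (hinert : ∀ {A B}, BT.Inert A → ¬ R A B)
    (hredex : ∀ a, (∃ B, R (cbv a) B) ↔ ∃ b, r a b) (t : Lam O ar) :
    Normal (Lam.Step r) t ↔ Normal (BT.Step R) (cbv t) :=
  normal_step_iff_of_translation
    (fun c _ ha => cbv_plug c fun T hT => ha (hT ▸ BT.inert_bang T))
    BT.IsSubterm.eq_cbv_or_inert hinert hredex t

theorem preservation_normal_forms_general {O : Type} {ar : O → ℕ} (o : O)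
    (lamRule : Lam O ar → Lam O ar → Prop) (bangRule : BT O ar → BT O ar → Prop)
    (hshapeB : ∀ a b, bangRule a b → ∃ Ts, a = BT.op o Ts)
    (hsoundN : ∀ a b, lamRule a b → bangRule (cbn a) (cbn b))
    (hcompleteN : ∀ a S, bangRule (cbn a) S → ∃ b, S = cbn b ∧ lamRule a b)
    (hsoundV : ∀ a b, lamRule a b → bangRule (cbv a) (cbv b))
    (hcompleteV : ∀ a S, bangRule (cbv a) S → ∃ b, S = cbv b ∧ lamRule a b)
    (t : Lam O ar) :
    -- CbN
    ((Normal (Lam.Step betaRoot) t ↔ Normal (BT.Step bbetaRoot) (cbn t)) ∧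
     (Normal (Lam.Step lamRule) t ↔ Normal (BT.Step bangRule) (cbn t))) ∧
    -- CbV
    ((Normal (Lam.Step betavRoot) t ↔ Normal (BT.Step bbetaRoot) (cbv t)) ∧
     (Normal (Lam.Step lamRule) t ↔ Normal (BT.Step bangRule) (cbv t))) := by
  have bangRule_inert {A B : BT O ar} (hA : A.Inert) := hA.not_of_op_shape hshapeB (B := B)
  exact ⟨⟨normal_step_iff_cbn BT.Inert.not_bbetaRoot exists_bbetaRoot_cbn_iff t,
      normal_step_iff_cbn bangRule_inert (exists_rel_translate_iff hsoundN hcompleteN) t⟩,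
    normal_step_iff_cbv BT.Inert.not_bbetaRoot exists_bbetaRoot_cbv_iff t,
    normal_step_iff_cbv bangRule_inert (exists_rel_translate_iff hsoundV hcompleteV) t⟩

/-- Preservation of normal forms by the CbN and CbV translations, for `β`/`βv`
and for each operator rule `o`. The operator rule is given both on λ-terms
(`lamRule`) and on bang-terms (`bangRule`, the corresponding rule), with
left-hand sides of shape `o(...)`, corresponding to each other under the
CbN and CbV translations. -/
theorem preservation_normal_forms {O : Type} {ar : O → ℕ} (o : O)
    (lamRule : Lam O ar → Lam O ar → Prop) (bangRule : BT O ar → BT O ar → Prop)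
    (hshapeL : ∀ a b, lamRule a b → ∃ ts, a = Lam.op o ts)
    (hshapeB : ∀ a b, bangRule a b → ∃ Ts, a = BT.op o Ts)
    (hsoundN : ∀ a b, lamRule a b → bangRule (cbn a) (cbn b))
    (hcompleteN : ∀ a S, bangRule (cbn a) S → ∃ b, S = cbn b ∧ lamRule a b)
    (hsoundV : ∀ a b, lamRule a b → bangRule (cbv a) (cbv b))
    (hcompleteV : ∀ a S, bangRule (cbv a) S → ∃ b, S = cbv b ∧ lamRule a b)
    (t : Lam O ar) :
    -- CbN
    ((Normal (Lam.Step betaRoot) t ↔ Normal (BT.Step bbetaRoot) (cbn t)) ∧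
     (Normal (Lam.Step lamRule) t ↔ Normal (BT.Step bangRule) (cbn t))) ∧
    -- CbV
    ((Normal (Lam.Step betavRoot) t ↔ Normal (BT.Step bbetaRoot) (cbv t)) ∧
     (Normal (Lam.Step lamRule) t ↔ Normal (BT.Step bangRule) (cbv t))) :=
  preservation_normal_forms_general o lamRule bangRule hshapeB hsoundN hcompleteN hsoundV hcompleteV
    t

end BangPaper
end
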